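/- For every positive integer t, the sum of squared coefficients satisfies ∑_{i=1}^{t} (α^i_t)^2 ≤ 2H/t. -/

import Mathlib

/-- Learning rate `α_t = (H+1)/(H+t)`. -/
noncomputable def lr (H t : ℕ) : ℝ := (H + 1) / (H + t)

/-- The coefficient `α^i_t`: for `i = 0` it is `∏_{j=1}^t (1 - α_j)`, and for
`i ≥ 1` it is `α_i · ∏_{j=i+1}^t (1 - α_j)`. -/
noncomputable def alphaC (H i t : ℕ) : ℝ :=
  if i = 0 then ∏ j ∈ Finset.Icc 1 t, (1 - lr H j)
  else lr H i * ∏ j ∈ Finset.Icc (i + 1) t, (1 - lr H j)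

/-! The coefficients `α^i_t` (`1 ≤ i ≤ t`) form a probability vector, and each of them is at
most `(H+1)/t`: the factors `1 - α_j = (j-1)/(H+j) ≤ (j-1)/j` telescope to `i/t`, and
`α_i · i/t = (H+1)/t · i/(H+i)`. A sum of squares of weights summing to `1` is at most their
maximum, and `(H+1)/t ≤ 2H/t` once `H ≥ 1`. -/

open Finset

theorem Finset.sum_sq_le_mul_sum {ι R : Type*} [CommSemiring R] [PartialOrder R]
    [IsOrderedRing R] {s : Finset ι} {a : ι → R} {M : R} (h0 : ∀ i ∈ s, 0 ≤ a i)
    (hM : ∀ i ∈ s, a i ≤ M) : ∑ i ∈ s, a i ^ 2 ≤ M * ∑ i ∈ s, a i := by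
  rw [mul_sum]
  refine sum_le_sum fun i hi => ?_
  rw [sq]
  exact mul_le_mul_of_nonneg_right (hM i hi) (h0 i hi)

theorem prod_Ioc_sub_one_div (i t : ℕ) (hi : 1 ≤ i) (hit : i ≤ t) :
    ∏ j ∈ Ioc i t, ((j : ℝ) - 1) / j = i / t := by
  induction t, hit using Nat.le_induction with
  | base => simp [div_self (by positivity : (i : ℝ) ≠ 0)]
  | succ t hit ih =>
    have ht : (t : ℝ) ≠ 0 := by norm_cast; omega
    rw [prod_Ioc_succ_top hit, ih]
    push_cast
    field_simp
    ring

section LearningRate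

variable {H : ℕ}

theorem lr_nonneg (j : ℕ) : 0 ≤ lr H j := by
  unfold lr; positivity

theorem one_sub_lr {j : ℕ} (hj : 1 ≤ j) : 1 - lr H j = ((j : ℝ) - 1) / (H + j) := by
  have : (H : ℝ) + j ≠ 0 := by positivity
  rw [lr]
  field_simp
  ring

theorem one_sub_lr_nonneg {j : ℕ} (hj : 1 ≤ j) : 0 ≤ 1 - lr H j := by
  rw [one_sub_lr hj]
  have : (1 : ℝ) ≤ j := by exact_mod_cast hj
  exact div_nonneg (by linarith) (by positivity)

theorem one_sub_lr_le {j : ℕ} (hj : 1 ≤ j) : 1 - lr H j ≤ ((j : ℝ) - 1) / j := by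
  rw [one_sub_lr hj]
  have : (1 : ℝ) ≤ j := by exact_mod_cast hj
  exact div_le_div_of_nonneg_left (by linarith) (by linarith) (by simp)

theorem prod_one_sub_lr_le {i t : ℕ} (hi : 1 ≤ i) (hit : i ≤ t) :
    ∏ j ∈ Ioc i t, (1 - lr H j) ≤ i / t := by
  rw [← prod_Ioc_sub_one_div i t hi hit]
  refine prod_le_prod (fun j hj => one_sub_lr_nonneg ?_) (fun j hj => one_sub_lr_le ?_) <;>
    linarith [(mem_Ioc.mp hj).1]

theorem alphaC_of_pos {i : ℕ} (hi : 1 ≤ i) (t : ℕ) :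
    alphaC H i t = lr H i * ∏ j ∈ Ioc i t, (1 - lr H j) := by
  rw [alphaC, if_neg (by omega), Icc_add_one_left_eq_Ioc]

theorem alphaC_nonneg {i : ℕ} (hi : 1 ≤ i) (t : ℕ) : 0 ≤ alphaC H i t := by
  rw [alphaC_of_pos hi]
  exact mul_nonneg (lr_nonneg i) (prod_nonneg fun j hj => one_sub_lr_nonneg (by
    linarith [(mem_Ioc.mp hj).1]))

theorem alphaC_le {i t : ℕ} (hi : 1 ≤ i) (hit : i ≤ t) : alphaC H i t ≤ (H + 1) / t := by
  have hi' : (0 : ℝ) < i := by exact_mod_cast hi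
  calc alphaC H i t ≤ lr H i * (i / t) := by
        rw [alphaC_of_pos hi]
        exact mul_le_mul_of_nonneg_left (prod_one_sub_lr_le hi hit) (lr_nonneg i)
    _ = (H + 1) / t * (i / (H + i)) := by rw [lr]; ring
    _ ≤ (H + 1) / t * 1 := by
        gcongr
        exact div_le_one_of_le₀ (by linarith [(H.cast_nonneg : (0 : ℝ) ≤ H)]) (by positivity)
    _ = (H + 1) / t := mul_one _

theorem alphaC_self {i : ℕ} (hi : 1 ≤ i) : alphaC H i i = lr H i := by
  simp [alphaC_of_pos hi]

theorem alphaC_succ {i t : ℕ} (hi : 1 ≤ i) (hit : i ≤ t) :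
    alphaC H i (t + 1) = alphaC H i t * (1 - lr H (t + 1)) := by
  rw [alphaC_of_pos hi, alphaC_of_pos hi, prod_Ioc_succ_top hit, mul_assoc]

theorem sum_alphaC {t : ℕ} (ht : 1 ≤ t) : ∑ i ∈ Icc 1 t, alphaC H i t = 1 := by
  induction t, ht using Nat.le_induction with
  | base => simp [alphaC_self, lr, div_self (by positivity : (H : ℝ) + 1 ≠ 0)]
  | succ t ht ih =>
    rw [sum_Icc_succ_top (by omega), alphaC_self (by omega),
      sum_congr rfl fun i hi => alphaC_succ (mem_Icc.mp hi).1 (mem_Icc.mp hi).2,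
      ← sum_mul, ih]
    ring

end LearningRate

theorem stmt_3 (H : ℕ) (hH : 1 ≤ H) (t : ℕ) (ht : 1 ≤ t) :
    ∑ i ∈ Finset.Icc 1 t, (alphaC H i t) ^ 2 ≤ 2 * H / t := by
  have hH' : (1 : ℝ) ≤ H := by exact_mod_cast hH
  calc ∑ i ∈ Icc 1 t, alphaC H i t ^ 2 ≤ (H + 1) / t * ∑ i ∈ Icc 1 t, alphaC H i t :=
        sum_sq_le_mul_sum (fun i hi => alphaC_nonneg (mem_Icc.mp hi).1 t)
          (fun i hi => alphaC_le (mem_Icc.mp hi).1 (mem_Icc.mp hi).2)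
    _ = (H + 1) / t := by rw [sum_alphaC ht, mul_one]
    _ ≤ 2 * H / t := by gcongr; linarith
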